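/- Let k, t be integers with k > 1 and t > 2, let A = (Z/k)^{t-1}, and let g ∈ Aut(A) be given by g(a_1, …, a_{t-1}) = (−(a_1 + a_2 + ⋯ + a_{t-1}), a_1, …, a_{t-2}). If gcd(t, k) ≠ 1, and moreover k > 2 in the case t = 4, then the affine rack (A, g) is of type D. -/
import Mathlib


/-- A nonempty subset of `X` closed under the operation `op` (a subrack). -/
def IsSubrackOf {X : Type*} (op : X → X → X) (Y : Set X) : Prop :=
  Y.Nonempty ∧ ∀ a ∈ Y, ∀ b ∈ Y, op a b ∈ Y

/-- The rack with underlying set `C ⊆ X` and operation `op` is of type D: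
there is a decomposable subrack `R ⊔ S` of `C` and `r ∈ R`, `s ∈ S` with
`r ▹ (s ▹ (r ▹ s)) ≠ s`. -/
def IsTypeDOn {X : Type*} (op : X → X → X) (C : Set X) : Prop :=
  ∃ R S : Set X, R ⊆ C ∧ S ⊆ C ∧ IsSubrackOf op R ∧ IsSubrackOf op S ∧
    Disjoint R S ∧
    (∀ r ∈ R, ∀ s ∈ S, op r s ∈ S) ∧ (∀ s ∈ S, ∀ r ∈ R, op s r ∈ R) ∧
    ∃ r ∈ R, ∃ s ∈ S, op r (op s (op r s)) ≠ s

/-- The automorphism `g` of `(ℤ/k)^{t-1}` given by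
`g(a₁, …, a_{t-1}) = (-(a₁ + ⋯ + a_{t-1}), a₁, …, a_{t-2})`. -/
def affAut (k t : ℕ) (a : Fin (t - 1) → ZMod k) : Fin (t - 1) → ZMod k :=
  fun i => if (i : ℕ) = 0 then -(∑ j, a j)
    else a ⟨(i : ℕ) - 1, by have := i.2; omega⟩

/-! ### Auxiliary definitions and lemmas -/

/-- The shift map, a reformulation of `affAut` with index type `Fin n`. -/
def shiftN (k n : ℕ) (a : Fin n → ZMod k) : Fin n → ZMod k :=
  fun i => if (i : ℕ) = 0 then -(∑ j, a j)
    else a ⟨(i : ℕ) - 1, by have := i.2; omega⟩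

/-- The shift map on `Fin (m + 2)`. -/
def shiftMap (k m : ℕ) (a : Fin (m + 2) → ZMod k) : Fin (m + 2) → ZMod k :=
  shiftN k (m + 2) a

lemma affAut_eq_shiftMap (k m : ℕ) (a : Fin (m + 2) → ZMod k) :
    affAut k (m + 3) a = shiftMap k m a := rfl

/-- The first standard basis vector. -/
def e0N (k n : ℕ) : Fin n → ZMod k := fun j => if (j : ℕ) = 0 then 1 else 0

/-- The invariant homomorphism `a ↦ ∑ (j+1) aⱼ  mod d`. -/
def psi (k d : ℕ) (hdk : d ∣ k) {n : ℕ} (a : Fin n → ZMod k) : ZMod d :=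
  ∑ j : Fin n, (((j : ℕ) : ZMod d) + 1) * ZMod.castHom hdk (ZMod d) (a j)

lemma psi_op (k d : ℕ) (hdk : d ∣ k) {n : ℕ} (u v w : Fin n → ZMod k) :
    psi k d hdk (u + (v - w)) = psi k d hdk u + (psi k d hdk v - psi k d hdk w) := by
  simp only [psi, Pi.add_apply, Pi.sub_apply, map_add, map_sub, mul_add, mul_sub]
  rw [Finset.sum_add_distrib, Finset.sum_sub_distrib]

lemma psi_shiftMap (k d m : ℕ) (hdk : d ∣ k) (hdt : d ∣ m + 3) (a : Fin (m + 2) → ZMod k) :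
    psi k d hdk (shiftMap k m a) = psi k d hdk a := by
  have h3 : ((m + 3 : ℕ) : ZMod d) = 0 := (ZMod.natCast_eq_zero_iff _ _).2 hdt
  simp only [psi, shiftMap, shiftN]
  rw [Fin.sum_univ_succ (n := m + 1)]
  conv_rhs => rw [Fin.sum_univ_castSucc (n := m + 1)]
  simp only [Fin.val_zero, Fin.val_succ, Fin.isValue, ite_true, if_pos rfl, Nat.add_sub_cancel,
    if_neg (Nat.succ_ne_zero _), map_neg, map_sum, Fin.val_last, Fin.coe_castSucc]
  have hc : ∀ i : Fin (m + 1), (⟨(i : ℕ), by omega⟩ : Fin (m + 2)) = i.castSucc := fun i => rfl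
  simp only [hc]
  rw [Fin.sum_univ_castSucc (n := m + 1)
    (f := fun j : Fin (m + 2) => (ZMod.castHom hdk (ZMod d)) (a j))]
  have expand : ∀ i : Fin (m + 1),
      (((i : ℕ) : ZMod d) + 1 + 1) * (ZMod.castHom hdk (ZMod d)) (a i.castSucc)
      = (((i : ℕ) : ZMod d) + 1) * (ZMod.castHom hdk (ZMod d)) (a i.castSucc)
        + (ZMod.castHom hdk (ZMod d)) (a i.castSucc) := by intro i; ring
  push_cast
  push_cast at h3
  simp only [expand, Finset.sum_add_distrib]
  linear_combination -(ZMod.castHom hdk (ZMod d)) (a (Fin.last (m + 1))) * h3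

lemma psi_e0 (k d m : ℕ) (hdk : d ∣ k) :
    psi k d hdk (e0N k (m + 2)) = 1 := by
  unfold psi e0N
  rw [Finset.sum_eq_single (0 : Fin (m + 2))]
  · simp only [Fin.val_zero, if_pos rfl, ite_true, Nat.cast_zero, zero_add, one_mul, map_one]
  · intro b _ hb
    have hbv : (b : ℕ) ≠ 0 := fun h => hb (Fin.ext h)
    simp [hbv]
  · simp

lemma final_ineqN (k n : ℕ) (hk : 1 < k) (hn : 2 ≤ n) (h4 : n = 3 → 2 < k) :
    shiftN k n (shiftN k n (shiftN k n (e0N k n)) +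
      (e0N k n - shiftN k n (e0N k n))) ≠ e0N k n := by
  haveI : Fact (1 < k) := ⟨hk⟩
  match n, hn, h4 with
  | 0, hn, _ => exact absurd hn (by omega)
  | 1, hn, _ => exact absurd hn (by omega)
  | 2, _, _ =>
    intro h
    have hv := congrFun h (0 : Fin 2)
    simp only [shiftN, e0N, Pi.add_apply, Pi.sub_apply, Fin.sum_univ_two] at hv
    norm_num at hv
  | 3, _, h4 =>
    intro h
    have hk3 : 2 < k := h4 rfl
    have hv := congrFun h (0 : Fin 3)
    simp only [shiftN, e0N, Pi.add_apply, Pi.sub_apply, Fin.sum_univ_three] at hv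
    norm_num at hv
    have h2 : ((2 : ℕ) : ZMod k) = 0 := by push_cast; linear_combination -hv
    rw [ZMod.natCast_eq_zero_iff] at h2
    exact absurd (Nat.le_of_dvd two_pos h2) (by omega)
  | (m + 4), _, _ =>
    intro h
    have hv := congrFun h (⟨3, by omega⟩ : Fin (m + 4))
    simp only [shiftN, e0N, Pi.add_apply, Pi.sub_apply] at hv
    norm_num at hv

/-- Let `k > 1`, `t > 2`, `A = (ℤ/k)^{t-1}` and `g` as above. If `gcd(t,k) ≠ 1`,
and `k > 2` when `t = 4`, then the affine rack `(A, g)`,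
with operation `x ▹ y = g(y) + (id - g)(x)`, is of type D. -/
theorem affine_rack_isTypeD (k t : ℕ) (hk : 1 < k) (ht : 2 < t)
    (hgcd : Nat.gcd t k ≠ 1) (h4 : t = 4 → 2 < k) :
    IsTypeDOn (fun x y : Fin (t - 1) → ZMod k => affAut k t y + (x - affAut k t x))
      Set.univ := by
  obtain ⟨m, rfl⟩ : ∃ m, t = m + 3 := ⟨t - 3, by omega⟩
  haveI : Fact (1 < k) := ⟨hk⟩
  set d := Nat.gcd (m + 3) k with hd_def
  have hdk : d ∣ k := Nat.gcd_dvd_right _ _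
  have hdt : d ∣ m + 3 := Nat.gcd_dvd_left _ _
  have hd1 : 1 < d := by
    have h0 : 0 < d := Nat.gcd_pos_of_pos_left k (by omega)
    omega
  haveI : Fact (1 < d) := ⟨hd1⟩
  set ψ : (Fin (m + 2) → ZMod k) → ZMod d := psi k d hdk with hψ
  have haff : ∀ a : Fin (m + 2) → ZMod k, affAut k (m + 3) a = shiftMap k m a :=
    fun a => rfl
  have hop : ∀ x y : Fin (m + 2) → ZMod k,
      ψ (shiftMap k m y + (x - shiftMap k m x)) = ψ y := by
    intro x y
    rw [hψ, psi_op, psi_shiftMap k d m hdk hdt, psi_shiftMap k d m hdk hdt]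
    ring
  set e0 : Fin (m + 2) → ZMod k := e0N k (m + 2) with he0
  have hψ0 : ψ (0 : Fin (m + 2) → ZMod k) = 0 := by simp [hψ, psi]
  have hψe0 : ψ e0 = 1 := psi_e0 k d m hdk
  refine ⟨{a | ψ a = 0}, {a | ψ a = 1}, Set.subset_univ _, Set.subset_univ _,
    ⟨⟨0, hψ0⟩, ?_⟩, ⟨⟨e0, hψe0⟩, ?_⟩, ?_, ?_, ?_, 0, hψ0, e0, hψe0, ?_⟩
  · intro a ha b hb; simpa [haff, hop] using hb
  · intro a ha b hb; simpa [haff, hop] using hb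
  · rw [Set.disjoint_left]
    intro a ha ha'
    exact zero_ne_one (ha.symm.trans ha')
  · intro r hr s hs; simpa [haff, hop] using hs
  · intro s hs r hr; simpa [haff, hop] using hr
  · -- final inequality
    simp only [haff]
    have hs0 : shiftMap k m (0 : Fin (m + 2) → ZMod k) = 0 := funext fun i => by
      simp [shiftMap, shiftN]
    intro h
    simp only [hs0, sub_zero, add_zero] at h
    rw [he0] at h
    exact final_ineqN k (m + 2) hk (by omega) (fun h3 => h4 (by omega)) h
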